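/- arXiv:2510.16481 — 4 statements merged into one kernel-verified Lean document; each statement's English description precedes it below -/
import Mathlib

section
/- Let n = 2^m and v be an integer point of the Hadamard polytope Had (the convex hull of the columns h_a of the Hadamard matrix). If a, b ∈ F_2^m satisfy v(a) ≠ 0 and v(b) ≠ 0, then v(a+b) = v(a)·v(b). -/
open scoped BigOperators Classical

noncomputable section

/-- `F m` is the vector space `𝔽₂^m`. -/
abbrev F (m : ℕ) := Fin m → ZMod 2

/-- The standard dot product on `𝔽₂^m`. -/
def dotF {m : ℕ} (a b : F m) : ZMod 2 := ∑ i, a i * b i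

/-- `had c` is the column of the Hadamard matrix indexed by `c`: `had c a = (-1)^⟨a,c⟩`. -/
def had {m : ℕ} (c : F m) : F m → ℝ := fun a => (-1 : ℝ) ^ (dotF a c).val

/-- The Hadamard polytope: the convex hull of the columns of the Hadamard matrix. -/
def Had (m : ℕ) : Set (F m → ℝ) := convexHull ℝ (Set.range (had (m := m)))

/-- A vector has all integer coordinates. -/
def IsIntPoint {ι : Type*} (v : ι → ℝ) : Prop := ∀ a, ∃ z : ℤ, v a = z

lemma zmod2_pow (x y : ZMod 2) :
    ((-1 : ℝ)) ^ (x + y).val = (-1 : ℝ) ^ x.val * (-1 : ℝ) ^ y.val := by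
  have hx : x = 0 ∨ x = 1 := by revert x; decide
  have hy : y = 0 ∨ y = 1 := by revert y; decide
  rcases hx with rfl | rfl <;> rcases hy with rfl | rfl <;>
    norm_num [show ZMod.val (2:ZMod 2) = 0 by decide, ZMod.val_one]

lemma dotF_add {m : ℕ} (a b c : F m) : dotF (a + b) c = dotF a c + dotF b c := by
  simp [dotF, add_mul, Finset.sum_add_distrib]

lemma had_mul {m : ℕ} (c a b : F m) : had c (a + b) = had c a * had c b := by
  rw [had, had, had, dotF_add, zmod2_pow]

lemma had_pm {m : ℕ} (c a : F m) : had c a = 1 ∨ had c a = -1 := by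
  rw [had]
  rcases Nat.even_or_odd (dotF a c).val with h | h
  · exact Or.inl (Even.neg_one_pow h)
  · exact Or.inr (Odd.neg_one_pow h)

lemma key {ι : Type} (t : Finset ι) (w : ι → ℝ) (s : ι → ℝ)
    (hw0 : ∀ i ∈ t, 0 ≤ w i) (hw1 : ∑ i ∈ t, w i = 1)
    (hs : ∀ i ∈ t, s i = 1 ∨ s i = -1)
    (x : ℝ) (hx : ∑ i ∈ t, w i * s i = x) (hxz : ∃ z : ℤ, x = z) (hne : x ≠ 0) :
    x * x = 1 ∧ ∀ i ∈ t, w i ≠ 0 → s i = x := by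
  have habs : |x| ≤ 1 := by
    rw [← hx]
    calc |∑ i ∈ t, w i * s i| ≤ ∑ i ∈ t, |w i * s i| := Finset.abs_sum_le_sum_abs _ _
    _ = ∑ i ∈ t, w i := by
        apply Finset.sum_congr rfl
        intro i hi
        rcases hs i hi with h | h <;> rw [h] <;>
          simp [abs_of_nonneg (hw0 i hi)]
    _ = 1 := hw1
  obtain ⟨z, rfl⟩ := hxz
  have hz1 : z = 1 ∨ z = -1 := by
    have : |z| ≤ 1 := by exact_mod_cast (by rwa [← Int.cast_abs] at habs : ((|z| : ℤ) : ℝ) ≤ 1)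
    have h0 : z ≠ 0 := by exact_mod_cast hne
    rw [abs_le] at this
    omega
  have hxx : (z : ℝ) * z = 1 := by rcases hz1 with rfl | rfl <;> norm_num
  refine ⟨hxx, ?_⟩
  have hsum0 : ∑ i ∈ t, w i * (1 - s i * z) = 0 := by
    have h2 : ∑ i ∈ t, w i * (1 - s i * (z:ℝ)) = ∑ i ∈ t, (w i - (w i * s i) * z) :=
      Finset.sum_congr rfl (fun i _ => by ring)
    rw [h2, Finset.sum_sub_distrib, ← Finset.sum_mul, hw1, hx, hxx]
    ring
  have hterm : ∀ i ∈ t, w i * (1 - s i * z) = 0 := by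
    refine (Finset.sum_eq_zero_iff_of_nonneg ?_).mp hsum0
    intro i hi
    apply mul_nonneg (hw0 i hi)
    rcases hs i hi with h | h <;> rcases hz1 with rfl | rfl <;> rw [h] <;> norm_num
  intro i hi hwne
  have := hterm i hi
  have h1 : s i * z = 1 := by
    rcases mul_eq_zero.mp this with h | h
    · exact absurd h hwne
    · linarith
  rcases hs i hi with h | h <;> rcases hz1 with rfl | rfl <;> rw [h] at h1 ⊢ <;>
    revert h1 <;> norm_num

theorem int_points_of_Had_multiplicative (m : ℕ) (v : F m → ℝ)
    (hv : v ∈ Had m) (hint : IsIntPoint v) (a b : F m)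
    (ha : v a ≠ 0) (hb : v b ≠ 0) :
    v (a + b) = v a * v b := by
  rw [Had, convexHull_eq] at hv
  obtain ⟨ι, t, w, z, hw0, hw1, hz, hcm⟩ := hv
  rw [Finset.centerMass, hw1, inv_one, one_smul] at hcm
  have heval : ∀ x : F m, v x = ∑ i ∈ t, w i * z i x := by
    intro x
    rw [← hcm]
    simp [Finset.sum_apply]
  have hpm : ∀ (x : F m), ∀ i ∈ t, z i x = 1 ∨ z i x = -1 := by
    intro x i hi
    obtain ⟨c, hc⟩ := hz i hi
    rw [← hc]; exact had_pm c x
  obtain ⟨hxa, hka⟩ := key t w (fun i => z i a) hw0 hw1 (hpm a) (v a) (heval a).symm (hint a) ha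
  obtain ⟨hxb, hkb⟩ := key t w (fun i => z i b) hw0 hw1 (hpm b) (v b) (heval b).symm (hint b) hb
  rw [heval (a + b)]
  have : ∀ i ∈ t, w i * z i (a + b) = w i * (v a * v b) := by
    intro i hi
    by_cases hw : w i = 0
    · simp [hw]
    · obtain ⟨c, hc⟩ := hz i hi
      rw [← hc, had_mul, hc, hka i hi hw, hkb i hi hw]
  rw [Finset.sum_congr rfl this, ← Finset.sum_mul, hw1, one_mul]
end
end

section
/- Let n = 2^m and v be an integer point of the Hadamard polytope Had. Then there exists b ∈ F_2^m such that v(a) = (-1)^{⟨a,b⟩} for all a ∈ supp(v). -/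
open scoped BigOperators Classical

noncomputable section

lemma key_forcing {ι : Type} [Fintype ι] (w : ι → ℝ) (ε : ι → ℝ)
    (hw₀ : ∀ i, 0 ≤ w i) (hε : ∀ i, ε i = 1 ∨ ε i = -1) (hw₁ : ∑ i, w i = 1)
    (hsum : ∑ i, w i * ε i = 1) (i : ι) (hi : w i ≠ 0) : ε i = 1 := by
  have h0 : ∑ j, w j * (1 - ε j) = 0 := by
    simp [mul_sub, Finset.sum_sub_distrib, hw₁, hsum]
  have hterm : ∀ j ∈ Finset.univ, 0 ≤ w j * (1 - ε j) := by
    intro j _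
    rcases hε j with h | h
    · simp [h]
    · simp [h]; exact hw₀ j
  have := (Finset.sum_eq_zero_iff_of_nonneg hterm).mp h0 i (Finset.mem_univ i)
  rcases hε i with h | h
  · exact h
  · exfalso; rw [h] at this; apply hi; linarith [mul_eq_zero.mp this]
  -- fallback handled above

theorem int_point_is_character_on_supp (m : ℕ) (v : F m → ℝ)
    (hv : v ∈ Had m) (hint : IsIntPoint v) :
    ∃ b : F m, ∀ a : F m, v a ≠ 0 → v a = (-1 : ℝ) ^ (dotF a b).val := by
  rw [Had, mem_convexHull_iff_exists_fintype] at hv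
  obtain ⟨ι, _, w, z, hw₀, hw₁, hz, hx⟩ := hv
  choose c hc using hz
  -- pointwise formula
  have hva : ∀ a, v a = ∑ i, w i * (-1 : ℝ) ^ (dotF a (c i)).val := by
    intro a
    have := congrFun hx a
    simp only [Finset.sum_apply, Pi.smul_apply, smul_eq_mul] at this
    rw [← this]
    refine Finset.sum_congr rfl fun i _ => ?_
    rw [← hc i]; rfl
  -- there is i₀ with w i₀ ≠ 0
  have : ∃ i₀, w i₀ ≠ 0 := by
    by_contra h
    push_neg at h
    simp [h] at hw₁
  obtain ⟨i₀, hi₀⟩ := this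
  refine ⟨c i₀, fun a ha => ?_⟩
  set ε : ι → ℝ := fun i => (-1 : ℝ) ^ (dotF a (c i)).val with hε
  have hεpm : ∀ i, ε i = 1 ∨ ε i = -1 := fun i => by
    rcases Nat.even_or_odd ((dotF a (c i)).val) with h | h
    · exact Or.inl h.neg_one_pow
    · exact Or.inr h.neg_one_pow
  -- |v a| ≤ 1
  have hle : |v a| ≤ 1 := by
    rw [hva a]
    calc |∑ i, w i * ε i| ≤ ∑ i, |w i * ε i| := Finset.abs_sum_le_sum_abs _ _
      _ = ∑ i, w i := by
          refine Finset.sum_congr rfl fun i _ => ?_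
          rcases hεpm i with h | h <;> rw [abs_mul, h] <;>
            simp [abs_of_nonneg (hw₀ i)]
      _ = 1 := hw₁
  obtain ⟨k, hk⟩ := hint a
  have hk1 : v a = 1 ∨ v a = -1 := by
    rw [hk] at ha hle ⊢
    have : k = 1 ∨ k = -1 := by
      have hk0 : k ≠ 0 := by exact_mod_cast ha
      have habs : |k| ≤ 1 := by exact_mod_cast hle
      rcases abs_le.mp habs with ⟨h1, h2⟩
      omega
    rcases this with h | h <;> simp [h]
  rcases hk1 with h | h
  · rw [h]
    have := key_forcing w ε hw₀ hεpm hw₁ (by rw [← hva a, h]) i₀ hi₀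
    exact this.symm
  · rw [h]
    have hsum : ∑ i, w i * (-ε i) = 1 := by
      have := hva a
      rw [h] at this
      have : ∑ i, w i * ε i = -1 := this.symm
      simp [mul_neg, Finset.sum_neg_distrib, this]
    have hεpm' : ∀ i, -ε i = 1 ∨ -ε i = -1 := by
      intro i; rcases hεpm i with h | h <;> simp [h]
    have h2 := key_forcing w (fun i => -ε i) hw₀ hεpm' hw₁ hsum i₀ hi₀
    simp only [neg_eq_iff_eq_neg] at h2
    rw [show ε i₀ = (-1:ℝ)^(dotF a (c i₀)).val from rfl] at h2
    rw [h2]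
end
end

section
/- Let n = 2^m and d ≤ (log₂ n)/4. Then the number of integer points in the dilate d·Had satisfies |d·Had ∩ ℤ^n| ≥ n^{Ω(d log n)}. More precisely, it is at least the number of d-element sets {W_1,…,W_d} of linear subspaces of F_2^m with pairwise distinct dimensions lying strictly between m/2 − d and m/2 + d. -/
open scoped BigOperators Classical Pointwise

noncomputable section

namespace HadAux

variable {m : ℕ}

/-- Abbreviation for the dimension of a subspace. -/
def rk {m : ℕ} (W : Submodule (ZMod 2) (F m)) : ℕ := Module.finrank (ZMod 2) W

lemma dotF_comm (a b : F m) : dotF a b = dotF b a := by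
  simp [dotF, mul_comm]

lemma dotF_add_right (b x y : F m) : dotF b (x + y) = dotF b x + dotF b y := by
  simp [dotF, mul_add, Finset.sum_add_distrib]

/-- The dot product as a bilinear form. -/
def bform (m : ℕ) : LinearMap.BilinForm (ZMod 2) (F m) :=
  LinearMap.mk₂ (ZMod 2) dotF
    (fun a a' b => by simp [dotF, add_mul, Finset.sum_add_distrib])
    (fun r a b => by simp [dotF, Finset.mul_sum, mul_assoc])
    (fun a b b' => by simp [dotF, mul_add, Finset.sum_add_distrib])
    (fun r a b => by
      simp only [dotF, Finset.mul_sum, Pi.smul_apply, smul_eq_mul]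
      exact Finset.sum_congr rfl fun i _ => by ring)

lemma bform_apply (a b : F m) : bform m a b = dotF a b := rfl

lemma bform_symm : (bform m).IsSymm := ⟨fun a b => by
  simp [bform_apply, dotF, mul_comm]⟩

lemma bform_refl : (bform m).IsRefl := bform_symm.isRefl

lemma bform_nondeg : (bform m).Nondegenerate := by
  refine (LinearMap.IsRefl.nondegenerate_iff_separatingLeft bform_refl).2 ?_
  intro a ha
  funext i
  have := ha (Pi.single i 1)
  simpa [bform_apply, dotF, Pi.single_apply, mul_ite, Finset.sum_ite_eq'] using this

/-- Orthogonal complement. -/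
def perp (W : Submodule (ZMod 2) (F m)) : Submodule (ZMod 2) (F m) :=
  (bform m).orthogonal W

lemma mem_perp {W : Submodule (ZMod 2) (F m)} {b : F m} :
    b ∈ perp W ↔ ∀ a ∈ W, dotF a b = 0 := Iff.rfl

lemma finrank_F : Module.finrank (ZMod 2) (F m) = m := by
  simp [Module.finrank_pi]

lemma perp_perp (W : Submodule (ZMod 2) (F m)) : perp (perp W) = W :=
  LinearMap.BilinForm.orthogonal_orthogonal bform_nondeg bform_refl W

lemma rk_perp (W : Submodule (ZMod 2) (F m)) : rk (perp W) = m - rk W := by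
  rw [rk, rk, perp, LinearMap.BilinForm.finrank_orthogonal bform_nondeg, finrank_F]

lemma card_submodule (U : Submodule (ZMod 2) (F m)) :
    Fintype.card U = 2 ^ rk U := by
  have := Module.card_eq_pow_finrank (K := ZMod 2) (V := U)
  rwa [ZMod.card] at this

lemma neg_one_pow_one_add (y : ZMod 2) :
    ((-1 : ℝ)) ^ ((1 + y : ZMod 2)).val = -((-1 : ℝ) ^ y.val) := by
  have hy : y = 0 ∨ y = 1 := by revert y; decide
  rcases hy with rfl | rfl <;>
    norm_num [show ((1 : ZMod 2)).val = 1 by decide, show ((2 : ZMod 2)).val = 0 by decide,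
      show ((0 : ZMod 2)).val = 0 by decide, show ((1 + 0 : ZMod 2)).val = 1 by decide,
      show ((1 + 1 : ZMod 2)).val = 0 by decide]

/-- Character sum over a subspace. -/
lemma charsum (U : Submodule (ZMod 2) (F m)) (b : F m) :
    ∑ a : U, ((-1 : ℝ) ^ (dotF b (a : F m)).val) =
      if b ∈ perp U then ((2 : ℝ) ^ rk U) else 0 := by
  split_ifs with hb
  · have : ∀ a : U, ((-1 : ℝ) ^ (dotF b (a : F m)).val) = 1 := by
      intro a
      have h0 : dotF (a : F m) b = 0 := hb (a : F m) a.2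
      rw [dotF_comm] at h0
      simp [h0]
    rw [Finset.sum_congr rfl (fun a _ => this a)]
    simp [card_submodule U]
  · rw [mem_perp] at hb
    push_neg at hb
    obtain ⟨a₀, ha₀, ha₀'⟩ := hb
    have h1 : dotF b a₀ = 1 := by
      rw [dotF_comm] at ha₀'
      revert ha₀'; generalize dotF b a₀ = y; revert y; decide
    have hre : ∑ a : U, ((-1 : ℝ) ^ (dotF b (a : F m)).val) =
        ∑ a : U, ((-1 : ℝ) ^ (dotF b ((⟨a₀, ha₀⟩ + a : U) : F m)).val) :=
      (Fintype.sum_equiv (Equiv.addLeft (⟨a₀, ha₀⟩ : U)) _ _ (fun a => rfl)).symm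
    have hneg : ∀ a : U, ((-1 : ℝ) ^ (dotF b ((⟨a₀, ha₀⟩ + a : U) : F m)).val) =
        -((-1 : ℝ) ^ (dotF b (a : F m)).val) := by
      intro a
      have hc : ((⟨a₀, ha₀⟩ + a : U) : F m) = a₀ + (a : F m) := rfl
      rw [hc, dotF_add_right, h1, neg_one_pow_one_add]
    rw [Finset.sum_congr rfl (fun a _ => hneg a), Finset.sum_neg_distrib] at hre
    linarith

lemma charsum' (U : Submodule (ZMod 2) (F m)) (b : F m) :
    ∑ a ∈ Finset.univ.filter (fun a => a ∈ U), ((-1 : ℝ) ^ (dotF b a).val) =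
      if b ∈ perp U then ((2 : ℝ) ^ rk U) else 0 := by
  rw [Finset.sum_subtype (p := fun a => a ∈ U) _ (by simp)
    (fun a => ((-1 : ℝ) ^ (dotF b a).val))]
  exact charsum U b

/-- Indicator function of a subspace. -/
def ind (U : Submodule (ZMod 2) (F m)) : F m → ℝ := fun a => if a ∈ U then 1 else 0

lemma vW_eq (W : Submodule (ZMod 2) (F m)) :
    (∑ c : W, ((2 : ℝ) ^ rk W)⁻¹ • had (c : F m)) = ind (perp W) := by
  funext a
  simp only [Finset.sum_apply, Pi.smul_apply, had, smul_eq_mul, ← Finset.mul_sum]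
  have h := charsum W a
  rw [h, ind]
  split_ifs <;> field_simp <;> simp

lemma ind_mem_Had (W : Submodule (ZMod 2) (F m)) : ind (perp W) ∈ Had m := by
  rw [← vW_eq]
  refine Convex.sum_mem (convex_convexHull ℝ _) (fun c _ => by positivity) ?_
    (fun c _ => subset_convexHull ℝ _ (Set.mem_range_self _))
  rw [Finset.sum_const, Finset.card_univ, card_submodule W, nsmul_eq_mul]
  push_cast
  field_simp

/-- The sum of indicators attached to a family of subspaces. -/
def Phi (S : Finset (Submodule (ZMod 2) (F m))) : F m → ℝ := ∑ W ∈ S, ind (perp W)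

lemma had_mem (c : F m) : had c ∈ Had m := subset_convexHull ℝ _ (Set.mem_range_self _)

lemma Phi_mem (S : Finset (Submodule (ZMod 2) (F m))) (d : ℕ) (hcard : S.card = d) :
    Phi S ∈ (d : ℝ) • Had m := by
  rcases Nat.eq_zero_or_pos d with rfl | hd
  · have : S = ∅ := Finset.card_eq_zero.mp hcard
    subst this
    refine Set.mem_smul_set.2 ⟨had 0, had_mem 0, ?_⟩
    simp [Phi]
  · have hd0 : (d : ℝ) ≠ 0 := by positivity
    refine Set.mem_smul_set.2 ⟨(d : ℝ)⁻¹ • Phi S, ?_, by rw [smul_inv_smul₀ hd0]⟩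
    rw [Phi, Finset.smul_sum]
    refine Convex.sum_mem (convex_convexHull ℝ _) (fun W _ => by positivity) ?_
      (fun W _ => ind_mem_Had W)
    rw [Finset.sum_const, hcard, nsmul_eq_mul]
    field_simp

lemma Phi_int (S : Finset (Submodule (ZMod 2) (F m))) : IsIntPoint (Phi S) := by
  intro a
  refine ⟨(S.filter fun W => a ∈ perp W).card, ?_⟩
  rw [Phi]
  simp [ind, Finset.sum_apply, Finset.sum_boole]

lemma rk_le_m (W : Submodule (ZMod 2) (F m)) : rk W ≤ m := by
  have := Submodule.finrank_le W
  rwa [finrank_F] at this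

/-- The Fourier coefficient computation. -/
lemma key (S : Finset (Submodule (ZMod 2) (F m))) (b : F m) :
    (∑ a : F m, Phi S a * (-1 : ℝ) ^ (dotF b a).val) =
      ((∑ W ∈ S.filter (fun W => b ∈ W), 2 ^ (m - rk W) : ℕ) : ℝ) := by
  have h1 : ∀ a : F m, Phi S a * (-1 : ℝ) ^ (dotF b a).val =
      ∑ W ∈ S, ind (perp W) a * (-1 : ℝ) ^ (dotF b a).val := by
    intro a
    rw [Phi, Finset.sum_apply, Finset.sum_mul]
  rw [Finset.sum_congr rfl (fun a _ => h1 a), Finset.sum_comm]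
  have h2 : ∀ W ∈ S, (∑ a : F m, ind (perp W) a * (-1 : ℝ) ^ (dotF b a).val) =
      if b ∈ W then ((2 : ℝ) ^ (m - rk W)) else 0 := by
    intro W _
    have hle : ∀ a : F m, ind (perp W) a * (-1 : ℝ) ^ (dotF b a).val =
        if a ∈ perp W then ((-1 : ℝ) ^ (dotF b a).val) else 0 := by
      intro a; rw [ind]; split_ifs <;> simp
    rw [Finset.sum_congr rfl (fun a _ => hle a), ← Finset.sum_filter,
      charsum' (perp W) b, perp_perp, rk_perp]
  rw [Finset.sum_congr rfl h2, ← Finset.sum_filter]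
  push_cast
  rfl

/-- Injectivity of `Phi` on families with pairwise distinct dimensions. -/
lemma Phi_injOn (S₁ S₂ : Finset (Submodule (ZMod 2) (F m)))
    (hinj₁ : Set.InjOn (fun W : Submodule (ZMod 2) (F m) => rk W) S₁)
    (hinj₂ : Set.InjOn (fun W : Submodule (ZMod 2) (F m) => rk W) S₂)
    (hcard : S₁.card = S₂.card) (hPhi : Phi S₁ = Phi S₂) : S₁ = S₂ := by
  have himg : ∀ b : F m,
      (S₁.filter (fun W => b ∈ W)).image (fun W => m - rk W) =
      (S₂.filter (fun W => b ∈ W)).image (fun W => m - rk W) := by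
    intro b
    have hsum : (∑ W ∈ S₁.filter (fun W => b ∈ W), 2 ^ (m - rk W) : ℕ) =
        (∑ W ∈ S₂.filter (fun W => b ∈ W), 2 ^ (m - rk W) : ℕ) := by
      have k1 := key S₁ b
      have k2 := key S₂ b
      rw [hPhi] at k1
      exact_mod_cast k1.symm.trans k2
    have inj : ∀ (S : Finset (Submodule (ZMod 2) (F m))),
        Set.InjOn (fun W : Submodule (ZMod 2) (F m) => rk W) S →
        ∀ x ∈ S.filter (fun W => b ∈ W), ∀ y ∈ S.filter (fun W => b ∈ W),
          m - rk x = m - rk y → x = y := by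
      intro S hS x hx y hy hxy
      simp only [Finset.mem_filter] at hx hy
      have hxm := rk_le_m x
      have hym := rk_le_m y
      have : rk x = rk y := by omega
      exact hS hx.1 hy.1 this
    have e1 := Finset.sum_image (f := fun k => 2 ^ k)
      (g := fun W : Submodule (ZMod 2) (F m) => m - rk W) (inj S₁ hinj₁)
    have e2 := Finset.sum_image (f := fun k => 2 ^ k)
      (g := fun W : Submodule (ZMod 2) (F m) => m - rk W) (inj S₂ hinj₂)
    apply Finset.geomSum_injective (n := 2) le_rfl
    simp only []
    rw [e1, e2]
    exact hsum
  have hmem : ∀ (S : Finset (Submodule (ZMod 2) (F m))),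
      Set.InjOn (fun W : Submodule (ZMod 2) (F m) => rk W) S →
      ∀ W ∈ S, ∀ b : F m, (b ∈ W ↔ (m - rk W) ∈
        (S.filter (fun W => b ∈ W)).image (fun W => m - rk W)) := by
    intro S hS W hW b
    constructor
    · intro hb
      exact Finset.mem_image_of_mem _ (Finset.mem_filter.2 ⟨hW, hb⟩)
    · intro h
      obtain ⟨W', hW', hW'eq⟩ := Finset.mem_image.1 h
      rw [Finset.mem_filter] at hW'
      have h1 := rk_le_m W
      have h2 := rk_le_m W'
      have hr : rk W' = rk W := by omega
      have : W' = W := hS hW'.1 hW hr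
      rw [← this]; exact hW'.2
  have hsub : S₁ ⊆ S₂ := by
    intro W hW
    have h0 : (m - rk W) ∈
        (S₂.filter (fun W => (0 : F m) ∈ W)).image (fun W => m - rk W) := by
      rw [← himg 0]
      exact ((hmem S₁ hinj₁ W hW 0).1 (zero_mem W))
    obtain ⟨W', hW', hW'eq⟩ := Finset.mem_image.1 h0
    rw [Finset.mem_filter] at hW'
    have hWW' : W = W' := by
      ext b
      rw [hmem S₁ hinj₁ W hW b, himg b]
      have := hmem S₂ hinj₂ W' hW'.1 b
      rw [this]
      have h1 := rk_le_m W
      have h2 := rk_le_m W'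
      have : m - rk W = m - rk W' := by omega
      rw [this]
    rw [hWW']; exact hW'.1
  exact Finset.eq_of_subset_of_card_le hsub (le_of_eq hcard.symm)

lemma abs_le_one_of_mem_Had {x : F m → ℝ} (hx : x ∈ Had m) (a : F m) : |x a| ≤ 1 := by
  have hconv : Convex ℝ {v : F m → ℝ | ∀ a, |v a| ≤ 1} := by
    intro v hv w hw p q hp hq hpq a
    have he : (p • v + q • w) a = p * v a + q * w a := by simp
    rw [he]
    calc |p * v a + q * w a| ≤ |p * v a| + |q * w a| := abs_add_le _ _
      _ = p * |v a| + q * |w a| := by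
          rw [abs_mul, abs_mul, abs_of_nonneg hp, abs_of_nonneg hq]
      _ ≤ p * 1 + q * 1 := by
          gcongr
          exacts [hv a, hw a]
      _ = 1 := by linarith
  have hsub : Had m ⊆ {v : F m → ℝ | ∀ a, |v a| ≤ 1} := by
    apply convexHull_min ?_ hconv
    rintro _ ⟨c, rfl⟩ a
    simp [had, abs_pow]
  exact hsub hx a

lemma finite_target (m d : ℕ) :
    Finite {x : F m → ℝ // x ∈ (d : ℝ) • Had m ∧ IsIntPoint x} := by
  classical
  set B := {x : F m → ℝ // x ∈ (d : ℝ) • Had m ∧ IsIntPoint x} with hB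
  have hbound : ∀ (x : B) (a : F m), |x.1 a| ≤ (d : ℝ) := by
    rintro ⟨x, hx, _⟩ a
    obtain ⟨y, hy, rfl⟩ := Set.mem_smul_set.1 hx
    show |((d : ℝ) • y) a| ≤ (d : ℝ)
    have he : ((d : ℝ) • y) a = (d : ℝ) * y a := rfl
    rw [he, abs_mul, abs_of_nonneg (by positivity : (0:ℝ) ≤ (d:ℝ))]
    calc (d : ℝ) * |y a| ≤ (d : ℝ) * 1 := by
          gcongr
          exact abs_le_one_of_mem_Had hy a
      _ = d := mul_one _
  set f : B → (F m → Set.Icc (-(d : ℤ)) (d : ℤ)) := fun x a =>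
    ⟨Classical.choose (x.2.2 a), by
      have hspec := Classical.choose_spec (x.2.2 a)
      have hb := hbound x a
      rw [hspec] at hb
      have hb' := abs_le.1 hb
      constructor
      · exact_mod_cast hb'.1
      · exact_mod_cast hb'.2⟩ with hf'
  have hf : Function.Injective f := by
    intro x y hxy
    apply Subtype.ext
    funext a
    have h1 := Classical.choose_spec (x.2.2 a)
    have h2 := Classical.choose_spec (y.2.2 a)
    have h3 : Classical.choose (x.2.2 a) = Classical.choose (y.2.2 a) := by
      have h4 := congrFun hxy a
      exact congrArg Subtype.val h4
    rw [h1, h2, h3]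
  exact Finite.of_injective f hf

end HadAux

theorem card_int_points_small_dilate (m d : ℕ) (hd : 4 * d ≤ m) :
    Nat.card {S : Finset (Submodule (ZMod 2) (F m)) //
        S.card = d ∧
        (∀ W ∈ S, m < 2 * Module.finrank (ZMod 2) W + 2 * d ∧
          2 * Module.finrank (ZMod 2) W < m + 2 * d) ∧
        Set.InjOn (fun W : Submodule (ZMod 2) (F m) => Module.finrank (ZMod 2) W) S} ≤
      Nat.card {x : F m → ℝ // x ∈ (d : ℝ) • Had m ∧ IsIntPoint x} := by
  have : Finite {x : F m → ℝ // x ∈ (d : ℝ) • Had m ∧ IsIntPoint x} := HadAux.finite_target m d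
  refine Nat.card_le_card_of_injective
    (fun S => ⟨HadAux.Phi S.1, HadAux.Phi_mem S.1 d S.2.1, HadAux.Phi_int S.1⟩) ?_
  rintro ⟨S₁, hc₁, _, hi₁⟩ ⟨S₂, hc₂, _, hi₂⟩ h
  have hPhi : HadAux.Phi S₁ = HadAux.Phi S₂ := congrArg Subtype.val h
  exact Subtype.ext (HadAux.Phi_injOn S₁ S₂ hi₁ hi₂ (hc₁.trans hc₂.symm) hPhi)
end
end

section
/- Let n = 2^m and fix 0 < ε < 1/2. If log^{1.5} n ≤ d ≤ (n log n)^{1/2 − ε}, then |d·Had ∩ ℤ^n| ≥ (1/2)·C(n−1, c)·2^c with c = ⌊d²/(4 log n)⌋, which is at least n^{ε d²/(2 log n)} for n sufficiently large. -/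
open scoped BigOperators Classical Pointwise

noncomputable section

open scoped symmDiff

namespace HadAux

def χ (x : ZMod 2) : ℝ := (-1 : ℝ) ^ x.val

lemma chi_zero : χ 0 = 1 := by simp [χ]

lemma chi_one : χ 1 = -1 := by
  have : (1 : ZMod 2).val = 1 := rfl
  simp [χ, this]

lemma neg_one_pow_mod_two (n : ℕ) : ((-1 : ℝ)) ^ (n % 2) = (-1 : ℝ) ^ n := by
  conv_rhs => rw [← Nat.div_add_mod n 2]
  rw [pow_add, pow_mul, neg_one_sq, one_pow, one_mul]

lemma chi_add (x y : ZMod 2) : χ (x + y) = χ x * χ y := by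
  unfold χ
  rw [ZMod.val_add, neg_one_pow_mod_two, pow_add]

lemma chi_cases (x : ZMod 2) : χ x = 1 ∨ χ x = -1 := by
  fin_cases x
  · exact Or.inl chi_zero
  · exact Or.inr chi_one

lemma dot_add_left {m : ℕ} (a a' b : F m) : dotF (a + a') b = dotF a b + dotF a' b := by
  unfold dotF
  rw [← Finset.sum_add_distrib]
  exact Finset.sum_congr rfl fun i _ => by simp [add_mul]

lemma dot_zero_left {m : ℕ} (b : F m) : dotF 0 b = 0 := by
  unfold dotF; simp

lemma dot_add_right {m : ℕ} (a b b' : F m) : dotF a (b + b') = dotF a b + dotF a b' := by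
  unfold dotF
  rw [← Finset.sum_add_distrib]
  exact Finset.sum_congr rfl fun i _ => by simp [mul_add]

lemma dot_single {m : ℕ} (v : F m) (i : Fin m) : dotF v (Pi.single i 1) = v i := by
  unfold dotF
  simp [Pi.single_apply, mul_ite, Finset.sum_ite_eq']

lemma sum_chi {m : ℕ} (v : F m) :
    ∑ b : F m, χ (dotF v b) = if v = 0 then ((2:ℝ)^m) else 0 := by
  by_cases hv : v = 0
  · subst hv
    simp only [if_pos rfl, dot_zero_left, chi_zero, Finset.sum_const, nsmul_eq_mul, mul_one]
    rw [Finset.card_univ]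
    norm_num [Fintype.card_fun, ZMod.card]
  · rw [if_neg hv]
    obtain ⟨i, hi⟩ : ∃ i, v i ≠ 0 := by
      by_contra h
      push_neg at h
      exact hv (funext h)
    have hvi : v i = 1 := by
      have h2 : ∀ x : ZMod 2, x ≠ 0 → x = 1 := by decide
      exact h2 _ hi
    set s : F m := Pi.single i 1 with hs
    have key : ∑ b : F m, χ (dotF v (b + s)) = ∑ b : F m, χ (dotF v b) :=
      Equiv.sum_comp (Equiv.addRight s) (fun b => χ (dotF v b))
    have key2 : ∀ b : F m, χ (dotF v (b + s)) = - χ (dotF v b) := by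
      intro b
      rw [dot_add_right, chi_add, hs, dot_single, hvi, chi_one, mul_neg_one]
    rw [Finset.sum_congr rfl (fun b _ => key2 b), Finset.sum_neg_distrib] at key
    linarith
end HadAux

namespace HadAux

lemma had_apply {m : ℕ} (b a : F m) : had b a = χ (dotF a b) := rfl

lemma add_eq_zero_iff' {m : ℕ} (a a' : F m) : a + a' = 0 ↔ a' = a := by
  have h2 : ∀ x y : ZMod 2, x + y = 0 ↔ y = x := by decide
  constructor
  · intro h; funext i; exact (h2 _ _).1 (congrFun h i)
  · intro h; subst h; funext i; exact (h2 _ _).2 rfl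

lemma mem_Had {m : ℕ} (y : F m → ℝ) (h0 : y 0 = 1)
    (hg : ∀ b : F m, 0 ≤ ∑ a, χ (dotF a b) * y a) : y ∈ Had m := by
  classical
  set n : ℝ := (2:ℝ)^m with hn'
  have hn : 0 < n := by positivity
  set w : F m → ℝ := fun b => (∑ a, χ (dotF a b) * y a) / n with hw
  have hw0 : ∀ b, 0 ≤ w b := fun b => div_nonneg (hg b) hn.le
  have hswap : ∀ a : F m, ∑ b : F m, χ (dotF a b) * y a = (if a = 0 then n else 0) * y a := by
    intro a; rw [← Finset.sum_mul, sum_chi]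
  have hsum : ∑ b, w b = 1 := by
    rw [hw, ← Finset.sum_div, Finset.sum_comm]
    rw [Finset.sum_congr rfl (fun a _ => hswap a)]
    rw [Finset.sum_eq_single (0 : F m)]
    · rw [if_pos rfl, h0, mul_one, div_self hn.ne']
    · intro a _ ha; rw [if_neg ha, zero_mul]
    · intro h; exact absurd (Finset.mem_univ _) h
  have hy : y = ∑ b : F m, w b • had b := by
    funext a
    rw [Finset.sum_apply]
    have : ∀ b : F m, (w b • had b) a = (∑ a' : F m, χ (dotF (a + a') b) * y a') / n := by
      intro b
      rw [Pi.smul_apply, smul_eq_mul, hw]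
      rw [div_mul_eq_mul_div, Finset.sum_mul]
      congr 1
      refine Finset.sum_congr rfl fun a' _ => ?_
      rw [had_apply, dot_add_left, chi_add]
      ring
    rw [Finset.sum_congr rfl (fun b _ => this b), ← Finset.sum_div, Finset.sum_comm]
    have : ∀ a' : F m, ∑ b : F m, χ (dotF (a + a') b) * y a'
        = (if a + a' = 0 then n else 0) * y a' := by
      intro a'; rw [← Finset.sum_mul, sum_chi]
    rw [Finset.sum_congr rfl (fun a' _ => this a')]
    rw [Finset.sum_eq_single a]
    · rw [if_pos (by rw [add_eq_zero_iff' a a]), mul_comm, mul_div_assoc, div_self hn.ne', mul_one]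
    · intro a' _ ha'
      rw [if_neg (fun h => ha' ((add_eq_zero_iff' a a').1 h)), zero_mul]
    · intro h; exact absurd (Finset.mem_univ _) h
  have hmem : Finset.univ.centerMass w had ∈ convexHull ℝ (Set.range (had (m := m))) :=
    Finset.centerMass_mem_convexHull _ (fun b _ => hw0 b)
      (by rw [hsum]; norm_num) (fun b _ => Set.mem_range_self b)
  rw [Finset.centerMass_eq_of_sum_1 _ _ hsum] at hmem
  rw [Had, hy]
  exact hmem

lemma mem_dilated_Had {m d : ℕ} (hd : 0 < d) (x : F m → ℝ) (hx0 : x 0 = d)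
    (hg : ∀ b : F m, 0 ≤ ∑ a, χ (dotF a b) * x a) : x ∈ (d : ℝ) • Had m := by
  have hd0 : (0:ℝ) < d := by exact_mod_cast hd
  refine ⟨(d:ℝ)⁻¹ • x, ?_, ?_⟩
  · refine mem_Had _ (by simp [hx0, inv_mul_cancel₀ hd0.ne']) (fun b => ?_)
    have := hg b
    have : 0 ≤ (d:ℝ)⁻¹ * ∑ a, χ (dotF a b) * x a := by positivity
    convert this using 1
    rw [Finset.mul_sum]
    exact Finset.sum_congr rfl fun a _ => by simp [Pi.smul_apply]; ring
  · show (d:ℝ) • (d:ℝ)⁻¹ • x = x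
    rw [smul_inv_smul₀ hd0.ne']

end HadAux

namespace HadAux

lemma Had_subset_box {m : ℕ} : Had m ⊆ {y : F m → ℝ | ∀ a, |y a| ≤ 1} := by
  apply convexHull_min
  · rintro _ ⟨c, rfl⟩ a
    rcases chi_cases (dotF a c) with h | h <;> simp [had_apply, h]
  · intro u hu v hv s t hs ht hst a
    calc |(s • u + t • v) a| = |s * u a + t * v a| := by simp
    _ ≤ |s * u a| + |t * v a| := abs_add_le _ _
    _ = s * |u a| + t * |v a| := by rw [abs_mul, abs_mul, abs_of_nonneg hs, abs_of_nonneg ht]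
    _ ≤ s * 1 + t * 1 := by gcongr; exacts [hu a, hv a]
    _ = 1 := by linarith

lemma finite_intPoints {m d : ℕ} :
    {x : F m → ℝ | x ∈ (d:ℝ) • Had m ∧ IsIntPoint x}.Finite := by
  classical
  have hbox : ∀ x ∈ (d:ℝ) • Had m, ∀ a, |x a| ≤ d := by
    rintro _ ⟨y, hy, rfl⟩ a
    have := Had_subset_box hy a
    calc |((d:ℝ) • y) a| = d * |y a| := by
          simp [abs_mul, abs_of_nonneg (by positivity : (0:ℝ) ≤ (d:ℕ))]
    _ ≤ d * 1 := by gcongr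
    _ = d := mul_one _
  apply Set.Finite.subset (Set.finite_range
    (fun (z : F m → (Finset.Icc (-(d:ℤ)) (d:ℤ))) => fun a => ((z a : ℤ) : ℝ)))
  rintro x ⟨hx, hint⟩
  choose z hz using hint
  have hmem : ∀ a, z a ∈ Finset.Icc (-(d:ℤ)) (d:ℤ) := by
    intro a
    rw [Finset.mem_Icc, ← abs_le]
    have := hbox x hx a
    rw [hz a] at this
    exact_mod_cast this
  exact ⟨fun a => ⟨z a, hmem a⟩, by funext a; exact (hz a).symm⟩

end HadAux

namespace HadAux

def ψ {m : ℕ} (d : ℕ) (S T : Finset (F m)) : F m → ℝ :=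
  fun a => if a = 0 then (d:ℝ) else if a ∈ T then -1 else if a ∈ S then 1 else 0

lemma psi_int {m : ℕ} (d : ℕ) (S T : Finset (F m)) : IsIntPoint (ψ d S T) := by
  intro a
  unfold ψ
  split_ifs
  · exact ⟨d, by push_cast; ring⟩
  · exact ⟨-1, by push_cast; ring⟩
  · exact ⟨1, by push_cast; ring⟩
  · exact ⟨0, by push_cast; ring⟩

def gfun {m : ℕ} (S T : Finset (F m)) (b : F m) : ℝ :=
  ∑ a ∈ S, χ (dotF a b) * (if a ∈ T then -1 else 1)

lemma sum_psi {m : ℕ} (d : ℕ) {S T : Finset (F m)} (hS : (0:F m) ∉ S) (hT : T ⊆ S) (b : F m) :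
    ∑ a, χ (dotF a b) * ψ d S T a = d + gfun S T b := by
  classical
  have hvan : ∀ a ∈ (Finset.univ : Finset (F m)), a ∉ insert (0:F m) S →
      χ (dotF a b) * ψ d S T a = 0 := by
    intro a _ ha
    rw [Finset.mem_insert] at ha
    push_neg at ha
    have : ψ d S T a = 0 := by
      unfold ψ
      rw [if_neg ha.1, if_neg (fun h => ha.2 (hT h)), if_neg ha.2]
    rw [this, mul_zero]
  rw [← Finset.sum_subset (Finset.subset_univ (insert (0:F m) S)) hvan]
  rw [Finset.sum_insert hS]
  congr 1
  · rw [dot_zero_left, chi_zero, one_mul]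
    unfold ψ
    rw [if_pos rfl]
  · refine Finset.sum_congr rfl fun a ha => ?_
    have ha0 : a ≠ 0 := fun h => hS (h ▸ ha)
    unfold ψ
    rw [if_neg ha0]
    by_cases h : a ∈ T
    · rw [if_pos h, if_pos h]
    · rw [if_neg h, if_neg h, if_pos ha]

lemma eta_sum {m : ℕ} {S T : Finset (F m)} (hT : T ⊆ S) :
    ∑ a ∈ S, (if a ∈ T then (-1:ℝ) else 1) = (S.card : ℝ) - 2 * T.card := by
  classical
  rw [Finset.sum_ite, Finset.sum_const, Finset.sum_const]
  have h1 : (S.filter (fun x => x ∈ T)).card = T.card := by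
    rw [Finset.filter_mem_eq_inter, Finset.inter_eq_right.mpr hT]
  have h2 : (S.filter (fun x => x ∉ T)).card = S.card - T.card := by
    have := Finset.card_filter_add_card_filter_not (s := S) (p := fun x => x ∈ T)
    omega
  have hle : T.card ≤ S.card := Finset.card_le_card hT
  rw [h1, h2, nsmul_eq_mul, nsmul_eq_mul, mul_one, Nat.cast_sub hle]
  ring

lemma gfun_symmDiff {m : ℕ} {S T : Finset (F m)} (hT : T ⊆ S) (b : F m) :
    gfun S (T ∆ (S.filter (fun a => χ (dotF a b) = -1))) b = (S.card : ℝ) - 2 * T.card := by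
  classical
  set A := S.filter (fun a => χ (dotF a b) = -1) with hA
  have key : ∀ a ∈ S, χ (dotF a b) * (if a ∈ T ∆ A then (-1:ℝ) else 1)
      = (if a ∈ T then (-1:ℝ) else 1) := by
    intro a ha
    rcases chi_cases (dotF a b) with h | h
    · have haA : a ∉ A := by
        rw [hA, Finset.mem_filter]
        rintro ⟨-, h'⟩; rw [h] at h'; norm_num at h'
      have : a ∈ T ∆ A ↔ a ∈ T := by
        rw [Finset.mem_symmDiff]
        constructor
        · rintro (⟨h1, -⟩ | ⟨h1, -⟩)
          · exact h1
          · exact absurd h1 haA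
        · intro h1; exact Or.inl ⟨h1, haA⟩
      rw [h, one_mul]
      by_cases hmemT : a ∈ T
      · rw [if_pos (this.2 hmemT), if_pos hmemT]
      · rw [if_neg (fun hc => hmemT (this.1 hc)), if_neg hmemT]
    · have haA : a ∈ A := by rw [hA, Finset.mem_filter]; exact ⟨ha, h⟩
      have : a ∈ T ∆ A ↔ a ∉ T := by
        rw [Finset.mem_symmDiff]
        constructor
        · rintro (⟨-, h2⟩ | ⟨-, h2⟩)
          · exact absurd haA h2
          · exact h2
        · intro h1; exact Or.inr ⟨haA, h1⟩
      rw [h]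
      by_cases hmemT : a ∈ T
      · rw [if_neg (fun hc => (this.1 hc) hmemT), if_pos hmemT]; ring
      · rw [if_pos (this.2 hmemT), if_neg hmemT]; ring
  rw [gfun, Finset.sum_congr rfl key, eta_sum hT]

end HadAux

namespace HadAux

lemma card_bad {m : ℕ} (d : ℕ) (S : Finset (F m)) (b : F m) :
    (S.powerset.filter (fun T => gfun S T b < -(d:ℝ))).card
      = (S.powerset.filter (fun T => (S.card:ℝ) - 2 * T.card < -(d:ℝ))).card := by
  classical
  set A := S.filter (fun a => χ (dotF a b) = -1) with hA
  have hAS : A ⊆ S := Finset.filter_subset _ _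
  have hsub : ∀ T ∈ S.powerset, T ∆ A ∈ S.powerset := by
    intro T hT
    rw [Finset.mem_powerset] at *
    exact le_trans symmDiff_le_sup (sup_le hT hAS)
  refine (Finset.card_bij' (fun T _ => T ∆ A) (fun T _ => T ∆ A) ?_ ?_ ?_ ?_).symm
  · intro T hT
    rw [Finset.mem_filter] at hT ⊢
    refine ⟨hsub T hT.1, ?_⟩
    rw [hA, gfun_symmDiff (Finset.mem_powerset.mp hT.1) b]
    exact hT.2
  · intro T hT
    rw [Finset.mem_filter] at hT ⊢
    refine ⟨hsub T hT.1, ?_⟩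
    have h1 : gfun S ((T ∆ A) ∆ A) b = (S.card : ℝ) - 2 * (T ∆ A).card := by
      rw [hA]
      exact gfun_symmDiff (Finset.mem_powerset.mp (hsub T hT.1)) b
    rw [symmDiff_symmDiff_cancel_right] at h1
    rw [← h1]
    exact hT.2
  · intro T _; exact symmDiff_symmDiff_cancel_right A T
  · intro T _; exact symmDiff_symmDiff_cancel_right A T

lemma card_filter_card_powerset {α : Type*} [DecidableEq α] (S : Finset α)
    (p : ℕ → Prop) [DecidablePred p] :
    (S.powerset.filter (fun T => p T.card)).card
      = ∑ k ∈ (Finset.range (S.card + 1)).filter p, S.card.choose k := by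
  classical
  rw [Finset.powerset_card_biUnion, Finset.filter_biUnion,
    Finset.card_biUnion (by
      intro x hx y hy hxy
      rw [Function.onFun, Finset.disjoint_left]
      intro T hT hT'
      rw [Finset.mem_filter, Finset.mem_powersetCard] at hT hT'
      exact hxy (hT.1.2.symm.trans hT'.1.2))]
  rw [Finset.sum_filter]
  refine Finset.sum_congr rfl fun k _ => ?_
  by_cases hk : p k
  · rw [if_pos hk]
    rw [Finset.filter_true_of_mem, Finset.card_powersetCard]
    intro T hT
    rw [(Finset.mem_powersetCard.mp hT).2]
    exact hk
  · rw [if_neg hk]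
    rw [Finset.filter_false_of_mem, Finset.card_empty]
    intro T hT
    rw [(Finset.mem_powersetCard.mp hT).2]
    exact hk

end HadAux

namespace HadAux
open Real

def tailSum (c d : ℕ) : ℕ :=
  ∑ k ∈ (Finset.range (c+1)).filter (fun k : ℕ => (c:ℝ) - 2*(k:ℝ) < -(d:ℝ)), c.choose k

lemma tail_le (c d : ℕ) (hd : 1 ≤ d) :
    (tailSum c d : ℝ) ≤ 2^c * Real.exp (-(d:ℝ)^2/(2*c)) := by
  classical
  rcases Nat.eq_zero_or_pos c with hc | hc
  · subst hc
    have he : (Finset.range 1).filter (fun k : ℕ => ((0:ℕ):ℝ) - 2*(k:ℝ) < -(d:ℝ)) = ∅ := by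
      rw [Finset.filter_eq_empty_iff]
      intro k hk
      rw [Finset.mem_range] at hk
      interval_cases k
      push_neg
      simp
    rw [tailSum, he]
    simp

  have hc0 : (0:ℝ) < c := by exact_mod_cast hc
  have hd0 : (0:ℝ) < d := by exact_mod_cast hd
  set t : ℝ := d / c with ht
  have ht0 : 0 < t := by positivity
  set x : ℝ := Real.exp (-2*t) with hx
  have hx0 : 0 < x := Real.exp_pos _
  have hx1 : x ≤ 1 := Real.exp_le_one_iff.mpr (by nlinarith)
  -- step A : tail * x ^ (((c:ℝ)-d)/2) ≤ (1+x)^c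
  have hA : (tailSum c d : ℝ) * x ^ (((c:ℝ) - d)/2) ≤ (1+x)^c := by
    rw [tailSum]
    push_cast
    rw [Finset.sum_mul]
    have hterm : ∀ k ∈ (Finset.range (c+1)).filter (fun k : ℕ => (c:ℝ) - 2*(k:ℝ) < -(d:ℝ)),
        (c.choose k : ℝ) * x ^ (((c:ℝ) - d)/2) ≤ 1^k * x^(c-k) * (c.choose k : ℝ) := by
      intro k hk
      rw [Finset.mem_filter, Finset.mem_range] at hk
      have hkc : k ≤ c := by omega
      have hcast : ((c - k : ℕ) : ℝ) = (c:ℝ) - k := by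
        push_cast [hkc]; ring
      have hexp : ((c - k : ℕ) : ℝ) ≤ ((c:ℝ) - d)/2 := by
        rw [hcast]; have := hk.2; linarith
      have hle : x ^ (((c:ℝ) - d)/2) ≤ x ^ ((c - k : ℕ) : ℝ) :=
        Real.rpow_le_rpow_of_exponent_ge hx0 hx1 hexp
      rw [Real.rpow_natCast] at hle
      rw [one_pow, one_mul, mul_comm (x ^ (c-k)) _]
      exact mul_le_mul_of_nonneg_left hle (by positivity)
    calc ∑ k ∈ (Finset.range (c+1)).filter (fun k : ℕ => (c:ℝ) - 2*(k:ℝ) < -(d:ℝ)),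
            (c.choose k : ℝ) * x ^ (((c:ℝ) - d)/2)
        ≤ ∑ k ∈ (Finset.range (c+1)).filter (fun k : ℕ => (c:ℝ) - 2*(k:ℝ) < -(d:ℝ)),
            1^k * x^(c-k) * (c.choose k : ℝ) := Finset.sum_le_sum hterm
      _ ≤ ∑ k ∈ Finset.range (c+1), 1^k * x^(c-k) * (c.choose k : ℝ) := by
            apply Finset.sum_le_sum_of_subset_of_nonneg (Finset.filter_subset _ _)
            intro k _ _
            positivity
      _ = (1+x)^c := (add_pow 1 x c).symm
  -- step B
  have hxpos : (0:ℝ) < x ^ (((c:ℝ) - d)/2) := Real.rpow_pos_of_pos hx0 _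
  have hB : (1+x)^c ≤ (2^c * Real.exp (-(d:ℝ)^2/(2*c))) * x ^ (((c:ℝ) - d)/2) := by
    have hcosh : 1 + x = 2 * Real.exp (-t) * Real.cosh t := by
      rw [Real.cosh_eq, hx]
      rw [show (-2*t) = (-t) + (-t) by ring, Real.exp_add]
      have := Real.exp_ne_zero t
      field_simp [Real.exp_neg]
      have h2 : Real.exp (-t) * Real.exp t = 1 := by rw [← Real.exp_add, neg_add_cancel, Real.exp_zero]
      linear_combination (-1:ℝ) * h2
    have hch : Real.cosh t ≤ Real.exp (t^2/2) := Real.cosh_le_exp_half_sq t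
    have h1x : (1+x)^c ≤ (2 * Real.exp (-t) * Real.exp (t^2/2))^c := by
      rw [hcosh]
      apply pow_le_pow_left₀ (by positivity)
      exact mul_le_mul_of_nonneg_left hch (by positivity)
    refine h1x.trans ?_
    have hxr : x ^ (((c:ℝ) - d)/2) = Real.exp (-2*t * (((c:ℝ) - d)/2)) := by
      rw [hx, ← Real.exp_mul]
    rw [hxr]
    rw [mul_pow, mul_pow, ← Real.exp_nat_mul, ← Real.exp_nat_mul, mul_assoc, ← Real.exp_add,
      mul_assoc, ← Real.exp_add]
    apply mul_le_mul_of_nonneg_left _ (by positivity : (0:ℝ) ≤ 2^c)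
    rw [Real.exp_le_exp]
    apply le_of_eq
    rw [ht]
    field_simp
    ring
  calc (tailSum c d : ℝ)
      = ((tailSum c d : ℝ) * x ^ (((c:ℝ) - d)/2)) / x ^ (((c:ℝ) - d)/2) := by
        field_simp
    _ ≤ ((1+x)^c) / x ^ (((c:ℝ) - d)/2) := by
        exact (div_le_div_iff_of_pos_right hxpos).mpr hA
    _ ≤ 2^c * Real.exp (-(d:ℝ)^2/(2*c)) := by
        rw [div_le_iff₀ hxpos]
        exact hB

end HadAux

namespace HadAux

lemma tailSum_zero (d : ℕ) : tailSum 0 d = 0 := by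
  rw [tailSum]
  have he : (Finset.range 1).filter (fun k : ℕ => ((0:ℕ):ℝ) - 2*(k:ℝ) < -(d:ℝ)) = ∅ := by
    rw [Finset.filter_eq_empty_iff]
    intro k hk
    rw [Finset.mem_range] at hk
    interval_cases k
    push_neg
    simp
  rw [he, Finset.sum_empty]

lemma bound_2m_tail {m c d : ℕ} (hm : 1 ≤ m) (hd : 1 ≤ d)
    (h4 : 4*(m:ℝ)*(c:ℝ) ≤ (d:ℝ)^2) :
    (2:ℝ)^m * (tailSum c d : ℝ) ≤ 2^c/2 := by
  rcases Nat.eq_zero_or_pos c with hc | hc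
  · subst hc
    rw [tailSum_zero]
    norm_num
  have hc0 : (0:ℝ) < c := by exact_mod_cast hc
  have hm0 : (1:ℝ) ≤ m := by exact_mod_cast hm
  have h1 := tail_le c d hd
  have hlog : Real.log 2 ≤ 1 := by
    have := Real.log_le_sub_one_of_pos (by norm_num : (0:ℝ) < 2)
    linarith
  have hexp : Real.exp (-(d:ℝ)^2/(2*c)) ≤ ((2:ℝ)^(m+1))⁻¹ := by
    have key : ((m:ℝ)+1) * Real.log 2 ≤ (d:ℝ)^2/(2*c) := by
      have h2 : 2*(m:ℝ) ≤ (d:ℝ)^2/(2*c) := by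
        rw [le_div_iff₀ (by positivity)]
        nlinarith
      have hlog0 : 0 ≤ Real.log 2 := Real.log_nonneg (by norm_num)
      nlinarith
    have : Real.exp (-(d:ℝ)^2/(2*c)) ≤ Real.exp (-(((m:ℝ)+1) * Real.log 2)) := by
      rw [Real.exp_le_exp]
      rw [neg_div]
      linarith
    refine this.trans (le_of_eq ?_)
    rw [Real.exp_neg]
    congr 1
    have : ((m:ℝ)+1) = ((m+1 : ℕ) : ℝ) := by push_cast; ring
    rw [this, Real.exp_nat_mul, Real.exp_log (by norm_num : (0:ℝ) < 2)]
  calc (2:ℝ)^m * (tailSum c d : ℝ) ≤ (2:ℝ)^m * (2^c * ((2:ℝ)^(m+1))⁻¹) := by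
        apply mul_le_mul_of_nonneg_left _ (by positivity)
        exact h1.trans (mul_le_mul_of_nonneg_left hexp (by positivity))
    _ = 2^c/2 := by
        rw [pow_succ]
        field_simp

lemma good_count {m d c : ℕ} (hm : 1 ≤ m) (hd : 1 ≤ d) (h4 : 4*(m:ℝ)*(c:ℝ) ≤ (d:ℝ)^2)
    {S : Finset (F m)} (hS0 : (0:F m) ∉ S) (hScard : S.card = c) :
    ((2:ℝ)^c)/2
      ≤ ((S.powerset.filter
          (fun T => ∀ b : F m, 0 ≤ ∑ a, χ (dotF a b) * ψ d S T a)).card : ℝ) := by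
  classical
  set P := fun T : Finset (F m) => ∀ b : F m, 0 ≤ ∑ a, χ (dotF a b) * ψ d S T a with hP
  have hsplit : (S.powerset.filter P).card + (S.powerset.filter (fun T => ¬ P T)).card
      = 2^c := by
    rw [Finset.card_filter_add_card_filter_not, Finset.card_powerset, hScard]
  have hbadsub : S.powerset.filter (fun T => ¬ P T)
      ⊆ Finset.univ.biUnion (fun b : F m =>
          S.powerset.filter (fun T => gfun S T b < -(d:ℝ))) := by
    intro T hT
    rw [Finset.mem_filter] at hT
    obtain ⟨hTp, hTbad⟩ := hT
    simp only [hP] at hTbad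
    push_neg at hTbad
    obtain ⟨b, hb⟩ := hTbad
    rw [Finset.mem_biUnion]
    refine ⟨b, Finset.mem_univ _, ?_⟩
    rw [Finset.mem_filter]
    refine ⟨hTp, ?_⟩
    rw [sum_psi d hS0 (Finset.mem_powerset.mp hTp) b] at hb
    linarith
  have hbad : ((S.powerset.filter (fun T => ¬ P T)).card : ℝ) ≤ 2^m * (tailSum c d : ℝ) := by
    have h1 : (S.powerset.filter (fun T => ¬ P T)).card
        ≤ ∑ b : F m, (S.powerset.filter (fun T => gfun S T b < -(d:ℝ))).card :=
      (Finset.card_le_card hbadsub).trans (Finset.card_biUnion_le)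
    have h2 : ∀ b : F m,
        (S.powerset.filter (fun T => gfun S T b < -(d:ℝ))).card = tailSum c d := by
      intro b
      rw [card_bad d S b, tailSum]
      have hcf := card_filter_card_powerset S (fun k : ℕ => (c:ℝ) - 2*(k:ℝ) < -(d:ℝ))
      rw [hScard] at hcf
      rw [← hcf]
      congr 1
      apply Finset.filter_congr
      intro T hT
      rw [hScard]
    rw [Finset.sum_congr rfl (fun b _ => h2 b), Finset.sum_const, Finset.card_univ] at h1
    have hcard : Fintype.card (F m) = 2^m := by
      rw [Fintype.card_fun, ZMod.card, Fintype.card_fin]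
    rw [hcard, smul_eq_mul] at h1
    calc ((S.powerset.filter (fun T => ¬ P T)).card : ℝ) ≤ ((2^m * tailSum c d : ℕ) : ℝ) := by
          exact_mod_cast h1
      _ = 2^m * (tailSum c d : ℝ) := by push_cast; ring
  have := bound_2m_tail (c := c) hm hd h4
  have hgood : ((S.powerset.filter P).card : ℝ)
      = 2^c - ((S.powerset.filter (fun T => ¬ P T)).card : ℝ) := by
    have hc2 : (((S.powerset.filter P).card + (S.powerset.filter (fun T => ¬ P T)).card : ℕ) : ℝ)
        = ((2^c : ℕ) : ℝ) := by rw [hsplit]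
    push_cast at hc2
    linarith
  rw [hgood]
  linarith

end HadAux

namespace HadAux

lemma main_card {m d c : ℕ} (hm : 1 ≤ m) (hd : 1 ≤ d) (h4 : 4*(m:ℝ)*(c:ℝ) ≤ (d:ℝ)^2) :
    ((2^m - 1).choose c : ℝ) * 2^c / 2
      ≤ Nat.card {x : F m → ℝ // x ∈ (d : ℝ) • Had m ∧ IsIntPoint x} := by
  classical
  set 𝒮 := (Finset.univ.erase (0 : F m)).powersetCard c with h𝒮
  set I := 𝒮.sigma (fun S => S.powerset.filter
      (fun T => ∀ b : F m, 0 ≤ ∑ a, χ (dotF a b) * ψ d S T a)) with hI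
  have hSfacts : ∀ S ∈ 𝒮, (0:F m) ∉ S ∧ S.card = c := by
    intro S hS
    rw [h𝒮, Finset.mem_powersetCard] at hS
    exact ⟨fun h0 => (Finset.notMem_erase _ _) (hS.1 h0), hS.2⟩
  have hIfacts : ∀ p ∈ I, p.2 ⊆ p.1 ∧ (0:F m) ∉ p.1 ∧ p.1.card = c
      ∧ ∀ b : F m, 0 ≤ ∑ a, χ (dotF a b) * ψ d p.1 p.2 a := by
    intro p hp
    rw [hI, Finset.mem_sigma, Finset.mem_filter, Finset.mem_powerset] at hp
    exact ⟨hp.2.1, (hSfacts _ hp.1).1, (hSfacts _ hp.1).2, hp.2.2⟩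
  -- injectivity
  have hinj : Set.InjOn (fun p : (_ : Finset (F m)) × Finset (F m) => ψ d p.1 p.2) I := by
    rintro ⟨S, T⟩ hp ⟨S', T'⟩ hq heq
    obtain ⟨hTS, hS0, -, -⟩ := hIfacts _ hp
    obtain ⟨hTS', hS0', -, -⟩ := hIfacts _ hq
    simp only at heq
    have hTchar : ∀ (S T : Finset (F m)), T ⊆ S → (0:F m) ∉ S →
        ∀ a, a ∈ T ↔ ψ d S T a = -1 := by
      intro S T hTS hS0 a
      unfold ψ
      by_cases h0 : a = 0
      · subst h0
        rw [if_pos rfl]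
        constructor
        · intro h; exact absurd (hTS h) hS0
        · intro h
          have : (0:ℝ) ≤ (d:ℝ) := by positivity
          norm_num [h] at this
      · rw [if_neg h0]
        constructor
        · intro h; rw [if_pos h]
        · intro h
          by_contra hT
          rw [if_neg hT] at h
          split_ifs at h <;> norm_num at h
    have hSchar : ∀ (S T : Finset (F m)), T ⊆ S → (0:F m) ∉ S →
        ∀ a, a ∈ S ↔ (ψ d S T a = -1 ∨ (a ≠ 0 ∧ ψ d S T a = 1)) := by
      intro S T hTS hS0 a
      constructor
      · intro h
        have h0 : a ≠ 0 := fun hh => hS0 (hh ▸ h)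
        by_cases hT : a ∈ T
        · exact Or.inl ((hTchar S T hTS hS0 a).1 hT)
        · refine Or.inr ⟨h0, ?_⟩
          unfold ψ
          rw [if_neg h0, if_neg hT, if_pos h]
      · rintro (h | ⟨h0, h1⟩)
        · exact hTS ((hTchar S T hTS hS0 a).2 h)
        · by_contra hS
          have hT : a ∉ T := fun hh => hS (hTS hh)
          unfold ψ at h1
          rw [if_neg h0, if_neg hT, if_neg hS] at h1
          norm_num at h1
    have hT : T = T' := by
      ext a
      rw [hTchar S T hTS hS0 a, hTchar S' T' hTS' hS0' a, heq]
    have hS : S = S' := by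
      ext a
      rw [hSchar S T hTS hS0 a, hSchar S' T' hTS' hS0' a, heq]
    subst hS; subst hT; rfl
  set G : Finset (F m → ℝ) := I.image (fun p => ψ d p.1 p.2) with hG
  have hGcard : G.card = I.card := Finset.card_image_of_injOn hinj
  have hIcard : ((2^m - 1).choose c : ℝ) * 2^c / 2 ≤ (I.card : ℝ) := by
    rw [hI, Finset.card_sigma]
    have hterm : ∀ S ∈ 𝒮, ((2:ℝ)^c)/2 ≤ ((S.powerset.filter
        (fun T => ∀ b : F m, 0 ≤ ∑ a, χ (dotF a b) * ψ d S T a)).card : ℝ) := by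
      intro S hS
      exact good_count hm hd h4 (hSfacts S hS).1 (hSfacts S hS).2
    have hsum : (𝒮.card : ℝ) * ((2:ℝ)^c/2) ≤
        ((∑ S ∈ 𝒮, (S.powerset.filter
          (fun T => ∀ b : F m, 0 ≤ ∑ a, χ (dotF a b) * ψ d S T a)).card : ℕ) : ℝ) := by
      push_cast
      calc (𝒮.card : ℝ) * ((2:ℝ)^c/2) = ∑ _S ∈ 𝒮, ((2:ℝ)^c/2) := by
            rw [Finset.sum_const, nsmul_eq_mul]
        _ ≤ _ := Finset.sum_le_sum hterm
    have h𝒮card : 𝒮.card = (2^m - 1).choose c := by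
      rw [h𝒮, Finset.card_powersetCard, Finset.card_erase_of_mem (Finset.mem_univ _),
        Finset.card_univ]
      congr 2
      rw [Fintype.card_fun, ZMod.card, Fintype.card_fin]
    rw [h𝒮card] at hsum
    calc ((2^m - 1).choose c : ℝ) * 2^c / 2
        = ((2^m - 1).choose c : ℝ) * (2^c/2) := by ring
      _ ≤ _ := hsum
  -- G is a set of integer points of the dilate
  have hGsub : ∀ x ∈ G, x ∈ (d : ℝ) • Had m ∧ IsIntPoint x := by
    intro x hx
    rw [hG, Finset.mem_image] at hx
    obtain ⟨p, hp, rfl⟩ := hx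
    obtain ⟨hTS, hS0, -, hgood⟩ := hIfacts _ hp
    refine ⟨mem_dilated_Had hd _ ?_ hgood, psi_int _ _ _⟩
    unfold ψ
    rw [if_pos rfl]
  -- conclude via Nat.card
  have hfin := finite_intPoints (m := m) (d := d)
  have hN : Nat.card {x : F m → ℝ // x ∈ (d : ℝ) • Had m ∧ IsIntPoint x}
      = ({x : F m → ℝ | x ∈ (d : ℝ) • Had m ∧ IsIntPoint x}).ncard :=
    Nat.card_coe_set_eq _
  have hsub2 : (G : Set (F m → ℝ)) ⊆ {x : F m → ℝ | x ∈ (d : ℝ) • Had m ∧ IsIntPoint x} := by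
    intro x hx
    exact hGsub x hx
  have hle : G.card ≤ ({x : F m → ℝ | x ∈ (d : ℝ) • Had m ∧ IsIntPoint x}).ncard := by
    rw [← Set.ncard_coe_finset]
    exact Set.ncard_le_ncard hsub2 hfin
  rw [hN]
  calc ((2^m - 1).choose c : ℝ) * 2^c / 2 ≤ (I.card : ℝ) := hIcard
    _ = (G.card : ℝ) := by rw [hGcard]
    _ ≤ _ := by exact_mod_cast hle

end HadAux

namespace HadAux

set_option maxHeartbeats 2000000 in
lemma part2_bound (ε : ℝ) (hε1 : 0 < ε) (hε2 : ε < 1/2) {m d c : ℕ} (hm : 100 ≤ m)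
    (hd1 : (m:ℝ) ^ (3/2 : ℝ) ≤ d)
    (hd2 : (d:ℝ) ≤ ((2^m * m : ℕ) : ℝ) ^ ((1:ℝ)/2 - ε))
    (hc : c = d^2/(4*m)) :
    (((2^m : ℕ)):ℝ) ^ (ε * (d:ℝ)^2/(2*m)) ≤ (1/2 : ℝ) * ((2^m-1).choose c) * 2^c := by
  have hm0 : (0:ℝ) < m := by
    have h : (0:ℕ) < m := by omega
    exact_mod_cast h
  have hm100 : (100:ℝ) ≤ m := by exact_mod_cast hm
  have hm1 : (1:ℝ) ≤ m := by linarith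
  set n : ℝ := (2:ℝ)^m with hn
  have hn0 : (0:ℝ) < n := by positivity
  have hn1 : (1:ℝ) ≤ n := one_le_pow₀ (by norm_num)
  have hd0 : (1:ℝ) ≤ d := by
    calc (1:ℝ) = (1:ℝ) ^ (3/2:ℝ) := (Real.one_rpow _).symm
      _ ≤ (m:ℝ) ^ (3/2:ℝ) := Real.rpow_le_rpow (by norm_num) hm1 (by norm_num)
      _ ≤ d := hd1
  -- basic div facts
  have hA : 4*(m:ℝ)*(c:ℝ) ≤ (d:ℝ)^2 := by
    have h := Nat.div_mul_le_self (d^2) (4*m)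
    rw [← hc] at h
    have h' : (((c * (4*m)) : ℕ) : ℝ) ≤ ((d^2 : ℕ) : ℝ) := by exact_mod_cast h
    push_cast at h'
    linarith
  have hB : (d:ℝ)^2 < 4*(m:ℝ)*((c:ℝ)+1) := by
    have h1 := Nat.div_add_mod (d^2) (4*m)
    have h2 : d^2 % (4*m) < 4*m := Nat.mod_lt _ (by omega)
    have h3 : d^2 < 4*m*(c+1) := by
      rw [hc]
      calc d^2 = 4*m*(d^2/(4*m)) + d^2 % (4*m) := (Nat.div_add_mod _ _).symm
        _ < 4*m*(d^2/(4*m)) + 4*m := Nat.add_lt_add_left h2 _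
        _ = 4*m*(d^2/(4*m)+1) := by ring
    have h4 : ((d^2 : ℕ) : ℝ) < ((4*m*(c+1) : ℕ) : ℝ) := by exact_mod_cast h3
    push_cast at h4
    linarith
  -- upper bound on d^2
  have hX0 : (0:ℝ) ≤ ((2^m * m : ℕ) : ℝ) := by positivity
  have hd2sq : (d:ℝ)^2 ≤ n ^ ((1:ℝ) - 2*ε) * m := by
    have h1 : (d:ℝ)^2 ≤ (((2^m * m : ℕ) : ℝ) ^ ((1:ℝ)/2 - ε))^2 :=
      pow_le_pow_left₀ (by positivity) hd2 2
    have h2 : (((2^m * m : ℕ) : ℝ) ^ ((1:ℝ)/2 - ε))^2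
        = ((2^m * m : ℕ) : ℝ) ^ ((1:ℝ) - 2*ε) := by
      rw [← Real.rpow_natCast (((2^m * m : ℕ) : ℝ) ^ ((1:ℝ)/2 - ε)) 2,
        ← Real.rpow_mul hX0]
      norm_num
      ring_nf
    have h3 : ((2^m * m : ℕ) : ℝ) = n * m := by push_cast; rw [hn]
    have h4 : ((2^m * m : ℕ) : ℝ) ^ ((1:ℝ) - 2*ε) = n ^ ((1:ℝ) - 2*ε) * (m:ℝ) ^ ((1:ℝ) - 2*ε) := by
      rw [h3, Real.mul_rpow hn0.le hm0.le]
    have h5 : (m:ℝ) ^ ((1:ℝ) - 2*ε) ≤ m := by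
      calc (m:ℝ) ^ ((1:ℝ) - 2*ε) ≤ (m:ℝ) ^ (1:ℝ) :=
            Real.rpow_le_rpow_of_exponent_le hm1 (by linarith)
        _ = m := Real.rpow_one _
    calc (d:ℝ)^2 ≤ ((2^m * m : ℕ) : ℝ) ^ ((1:ℝ) - 2*ε) := h1.trans_eq h2
      _ = n ^ ((1:ℝ) - 2*ε) * (m:ℝ) ^ ((1:ℝ) - 2*ε) := h4
      _ ≤ n ^ ((1:ℝ) - 2*ε) * m := by
          apply mul_le_mul_of_nonneg_left h5 (Real.rpow_nonneg hn0.le _)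
  have hcu : (c:ℝ) ≤ n ^ ((1:ℝ) - 2*ε) / 4 := by
    have h1 : 4*(m:ℝ)*(c:ℝ) ≤ n ^ ((1:ℝ) - 2*ε) * m := hA.trans hd2sq
    rw [le_div_iff₀ (by norm_num : (0:ℝ) < 4)]
    nlinarith
  have hne : n ^ ((1:ℝ) - 2*ε) ≤ n := by
    calc n ^ ((1:ℝ) - 2*ε) ≤ n ^ (1:ℝ) :=
          Real.rpow_le_rpow_of_exponent_le hn1 (by linarith)
      _ = n := Real.rpow_one _
  have hcn : (c:ℝ) ≤ n/4 := hcu.trans (by linarith)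
  -- lower bound on c
  have hm3 : (m:ℝ)^3 ≤ (d:ℝ)^2 := by
    have h1 : ((m:ℝ) ^ (3/2:ℝ))^2 ≤ (d:ℝ)^2 := pow_le_pow_left₀ (by positivity) hd1 2
    have h2 : ((m:ℝ) ^ (3/2:ℝ))^2 = (m:ℝ)^3 := by
      rw [← Real.rpow_natCast ((m:ℝ) ^ (3/2:ℝ)) 2, ← Real.rpow_mul hm0.le,
        ← Real.rpow_natCast (m:ℝ) 3]
      norm_num
    linarith [h2 ▸ h1]
  have hcm : (m:ℝ) + 1 ≤ c := by
    have h1 : (m:ℝ)^2 < 4*((c:ℝ)+1) := by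
      have h2 : (m:ℝ) * ((m:ℝ)^2) < (m:ℝ) * (4*((c:ℝ)+1)) := by
        have : (m:ℝ)^3 = m * m^2 := by ring
        nlinarith
      exact lt_of_mul_lt_mul_left h2 hm0.le
    nlinarith
  have hc0 : (0:ℝ) < c := by linarith
  have hc1 : 1 ≤ c := by exact_mod_cast show (1:ℝ) ≤ c by linarith
  have hcnat : c ≤ 2^m := by
    have : (c:ℝ) ≤ ((2^m : ℕ):ℝ) := by push_cast; rw [← hn]; linarith
    exact_mod_cast this
  -- choose lower bound
  have hchoose : ((n - c)/c)^c ≤ (((2^m-1).choose c : ℕ) : ℝ) := by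
    have h1 : (2^m - 1 + 1 - c)^c ≤ (2^m - 1).descFactorial c :=
      Nat.pow_sub_le_descFactorial _ _
    rw [Nat.sub_add_cancel (Nat.one_le_two_pow)] at h1
    rw [Nat.descFactorial_eq_factorial_mul_choose] at h1
    have h2 : c.factorial * ((2^m-1).choose c) ≤ c^c * ((2^m-1).choose c) :=
      Nat.mul_le_mul_right _ (Nat.factorial_le_pow c)
    have h3 : (2^m - c)^c ≤ c^c * ((2^m-1).choose c) := le_trans h1 h2
    have h4 : (((2^m - c : ℕ)) : ℝ)^c ≤ (c:ℝ)^c * (((2^m-1).choose c : ℕ) : ℝ) := by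
      exact_mod_cast h3
    have h5 : (((2^m - c : ℕ)) : ℝ) = n - c := by
      rw [Nat.cast_sub hcnat]
      push_cast
      rw [← hn]
    rw [h5] at h4
    rw [div_pow, div_le_iff₀ (by positivity : (0:ℝ) < (c:ℝ)^c)]
    linarith [h4]
  have hq : 2*n^(2*ε) ≤ (n - c)/c := by
    have hX : (0:ℝ) < n ^ ((1:ℝ) - 2*ε) := Real.rpow_pos_of_pos hn0 _
    have hdd : (n/2)/(n ^ ((1:ℝ) - 2*ε) / 4) ≤ (n - c)/c := by
      apply div_le_div₀ (by linarith) (by linarith) hc0 hcu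
    refine le_trans (le_of_eq ?_) hdd
    have e1 : n ^ (2*ε) = n / n ^ ((1:ℝ) - 2*ε) := by
      have e2 : n ^ (2*ε) = n ^ ((1:ℝ) - (1 - 2*ε)) := by norm_num
      rw [e2, Real.rpow_sub hn0, Real.rpow_one]
    rw [e1]
    field_simp
    ring
  -- final chain
  have hnc : (((2^m : ℕ)):ℝ) = n := by push_cast; rw [hn]
  have hstep1 : (((2^m : ℕ)):ℝ) ^ (ε * (d:ℝ)^2/(2*m)) ≤ n ^ (2*ε*(c:ℝ) + 2*ε) := by
    rw [hnc]
    apply Real.rpow_le_rpow_of_exponent_le hn1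
    have h1 : (d:ℝ)^2/(2*m) ≤ 2*((c:ℝ)+1) := by
      rw [div_le_iff₀ (by positivity)]
      nlinarith
    calc ε * (d:ℝ)^2/(2*m) = ε * ((d:ℝ)^2/(2*m)) := by ring
      _ ≤ ε * (2*((c:ℝ)+1)) := by
          apply mul_le_mul_of_nonneg_left h1 hε1.le
      _ = 2*ε*(c:ℝ) + 2*ε := by ring
  have hstep2 : n ^ (2*ε*(c:ℝ) + 2*ε) = (n ^ (2*ε))^c * n ^ (2*ε) := by
    rw [Real.rpow_add hn0]
    congr 1
    rw [Real.rpow_mul hn0.le, Real.rpow_natCast]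
  have hstep3 : n ^ (2*ε) ≤ (4:ℝ)^c / 2 := by
    have h1 : n ^ (2*ε) ≤ n := by
      calc n ^ (2*ε) ≤ n ^ (1:ℝ) := Real.rpow_le_rpow_of_exponent_le hn1 (by linarith)
        _ = n := Real.rpow_one _
    have hmc : m + 1 ≤ 2*c := by
      have : (m:ℝ) + 1 ≤ 2*(c:ℝ) := by linarith
      exact_mod_cast this
    have h2 : (2:ℝ)^(m+1) ≤ (2:ℝ)^(2*c) := pow_le_pow_right₀ (by norm_num) hmc
    have h3 : (4:ℝ)^c = (2:ℝ)^(2*c) := by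
      rw [show (4:ℝ) = 2^2 by norm_num, ← pow_mul]
    rw [h3, le_div_iff₀ (by norm_num : (0:ℝ) < 2)]
    calc n ^ (2*ε) * 2 ≤ n * 2 := by linarith
      _ = (2:ℝ)^(m+1) := by rw [hn, pow_succ]
      _ ≤ (2:ℝ)^(2*c) := h2
  have hp0 : (0:ℝ) ≤ (n ^ (2*ε))^c := by positivity
  have hq2 : (2*n^(2*ε))^c ≤ (((2^m-1).choose c : ℕ) : ℝ) := by
    refine le_trans ?_ hchoose
    apply pow_le_pow_left₀ (by positivity) hq
  have hZ : (((2^m : ℕ)):ℝ) ^ (ε * (d:ℝ)^2/(2*m)) ≤ (1/2 : ℝ) * ((2^m-1).choose c) * 2^c :=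
   calc (((2^m : ℕ)):ℝ) ^ (ε * (d:ℝ)^2/(2*m))
      ≤ (n ^ (2*ε))^c * n ^ (2*ε) := hstep1.trans_eq hstep2
    _ ≤ (n ^ (2*ε))^c * ((4:ℝ)^c / 2) := mul_le_mul_of_nonneg_left hstep3 hp0
    _ ≤ (1/2 : ℝ) * ((2^m-1).choose c) * 2^c := by
        have h2c : (0:ℝ) ≤ 2^c := by positivity
        have h4 : (4:ℝ)^c = 2^c * 2^c := by rw [show (4:ℝ) = 2*2 by norm_num, mul_pow]
        have h5 : (2*n^(2*ε))^c = 2^c * (n^(2*ε))^c := mul_pow _ _ _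
        have h := mul_le_mul_of_nonneg_right hq2 h2c
        rw [h5] at h
        rw [h4]
        nlinarith [h]
  exact hZ
end HadAux

open HadAux in
theorem card_int_points_mid_dilate (ε : ℝ) (hε1 : 0 < ε) (hε2 : ε < 1 / 2) :
    ∃ N : ℕ, ∀ m d c : ℕ,
      ((m : ℝ)) ^ (3 / 2 : ℝ) ≤ (d : ℝ) →
      (d : ℝ) ≤ ((2 ^ m * m : ℕ) : ℝ) ^ ((1 : ℝ) / 2 - ε) →
      c = d ^ 2 / (4 * m) →
      ((1 / 2 : ℝ) * (2 ^ m - 1).choose c * 2 ^ c ≤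
          Nat.card {x : F m → ℝ // x ∈ (d : ℝ) • Had m ∧ IsIntPoint x}) ∧
      (N ≤ 2 ^ m →
        ((2 ^ m : ℕ) : ℝ) ^ (ε * (d : ℝ) ^ 2 / (2 * m)) ≤
          Nat.card {x : F m → ℝ // x ∈ (d : ℝ) • Had m ∧ IsIntPoint x}) := by
  classical
  refine ⟨2^100, ?_⟩
  intro m d c hd1 hd2 hc
  rcases Nat.eq_zero_or_pos m with hm0 | hm0
  · -- m = 0
    subst hm0
    have hd : d = 0 := by
      have h0 : ((2^0*0 : ℕ):ℝ) ^ ((1:ℝ)/2 - ε) = 0 := by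
        norm_num
        exact Real.zero_rpow (by linarith)
      rw [h0] at hd2
      have : (d:ℝ) = 0 := le_antisymm hd2 (by positivity)
      exact_mod_cast this
    subst hd
    have hc0 : c = 0 := by simp [hc]
    subst hc0
    have hHad : ((0:ℕ):ℝ) • Had 0 = {(0 : F 0 → ℝ)} := by
      rw [Nat.cast_zero]
      apply Set.zero_smul_set
      exact ⟨had 0, subset_convexHull ℝ _ (Set.mem_range_self 0)⟩
    have hset : {x : F 0 → ℝ | x ∈ ((0:ℕ):ℝ) • Had 0 ∧ IsIntPoint x} = {(0 : F 0 → ℝ)} := by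
      ext x
      simp only [Set.mem_setOf_eq, hHad, Set.mem_singleton_iff]
      constructor
      · rintro ⟨h, -⟩; exact h
      · rintro rfl; exact ⟨rfl, fun a => ⟨0, by simp⟩⟩
    have hcoe : Nat.card {x : F 0 → ℝ // x ∈ ((0:ℕ):ℝ) • Had 0 ∧ IsIntPoint x}
        = ({x : F 0 → ℝ | x ∈ ((0:ℕ):ℝ) • Had 0 ∧ IsIntPoint x}).ncard :=
      Nat.card_coe_set_eq _
    have hcard : Nat.card {x : F 0 → ℝ // x ∈ ((0:ℕ):ℝ) • Had 0 ∧ IsIntPoint x} = 1 := by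
      rw [hcoe, hset, Set.ncard_singleton]
    constructor
    · rw [hcard]
      norm_num
    · intro _
      rw [hcard]
      norm_num [Real.one_rpow]
  · -- m ≥ 1
    have hd : 1 ≤ d := by
      have hm1 : (1:ℝ) ≤ m := by exact_mod_cast hm0
      have h1 : (1:ℝ) ≤ (m:ℝ)^(3/2:ℝ) := by
        calc (1:ℝ) = (1:ℝ)^(3/2:ℝ) := (Real.one_rpow _).symm
          _ ≤ _ := Real.rpow_le_rpow (by norm_num) hm1 (by norm_num)
      have h2 : (1:ℝ) ≤ d := h1.trans hd1
      exact_mod_cast h2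
    have h4 : 4*(m:ℝ)*(c:ℝ) ≤ (d:ℝ)^2 := by
      have h := Nat.div_mul_le_self (d^2) (4*m)
      rw [← hc] at h
      have h' : (((c * (4*m)) : ℕ) : ℝ) ≤ ((d^2 : ℕ) : ℝ) := by exact_mod_cast h
      push_cast at h'
      linarith
    have hpart1 := main_card hm0 hd h4
    constructor
    · calc (1/2:ℝ) * ((2^m-1).choose c) * 2^c = ((2^m-1).choose c : ℝ) * 2^c / 2 := by ring
        _ ≤ _ := hpart1
    · intro hN
      have hm100 : 100 ≤ m := (Nat.pow_le_pow_iff_right (by norm_num)).mp hN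
      have hp2 := part2_bound ε hε1 hε2 hm100 hd1 hd2 hc
      calc ((2^m:ℕ):ℝ)^(ε*(d:ℝ)^2/(2*m)) ≤ (1/2:ℝ) * ((2^m-1).choose c) * 2^c := hp2
        _ = ((2^m-1).choose c : ℝ) * 2^c / 2 := by ring
        _ ≤ _ := hpart1
end
end
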